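/- There exists a density f supported on [0,∞) that belongs to the subexponential density class 𝓢₀ but is not almost decreasing. -/

import Mathlib

/-!
Take `f(x) = c · exp (ψ (log x))` for `x ≥ e¹⁶⁰⁰` (and `0` before), where
`ψ v = 20 √v sin √v - 2 v`. On `[1600, ∞)` the exponent `ψ` is `13`-Lipschitz and
`ψ v ≤ -3v/2`, so `f ≤ c x^(-3/2)` is integrable and `f u ≤ exp (13 |log u - log x|) f x`.
This comparison in logarithmic scale makes `f` long-tailed and gives `f (x - y) ≤ 2¹³ f x` for
`y ≤ x / 2`; with that domination, dominated convergence applied to `f (x - y) / f x · f y`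
yields `∫₀^{x/2} f (x - y) f y dy / f x → 1`, and symmetry of the convolution gives the limit `2`.
Yet `ψ` rises by `(2s + π)(20 - 2π)` from `v = s²` to `v = (s + π)²` whenever `sin s = -1`,
so `f y / f x` is unbounded along `x ≤ y`.
-/

open MeasureTheory Filter Set

noncomputable section

/-- A probability density supported on `[0, ∞)`. -/
def IsDensity (f : ℝ → ℝ) : Prop :=
  Measurable f ∧ (∀ x < (0:ℝ), f x = 0) ∧ (∀ x : ℝ, 0 ≤ f x) ∧
    ∫ y in Set.Ioi (0:ℝ), f y = 1

/-- The long-tailed density class `𝓛₀`. -/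
def LongTailedDensity (f : ℝ → ℝ) : Prop :=
  (∀ᶠ x in atTop, 0 < f x) ∧
  ∀ t : ℝ, Tendsto (fun x => f (x + t) / f x) atTop (nhds 1)

/-- The subexponential density class `𝓢₀`. -/
def SubexpDensity (f : ℝ → ℝ) : Prop :=
  LongTailedDensity f ∧
  Tendsto (fun x => (∫ y in (0:ℝ)..x, f (x - y) * f y) / f x) atTop (nhds 2)

/-- `f` is almost decreasing: beyond some `x₀ ≥ 0` it is positive and the
ratios `f y / f x` for `x₀ ≤ x ≤ y` are bounded. -/
def AlmostDecreasing (f : ℝ → ℝ) : Prop :=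
  ∃ x₀ : ℝ, 0 ≤ x₀ ∧ (∀ x : ℝ, x₀ ≤ x → 0 < f x) ∧
    ∃ C : ℝ, ∀ x y : ℝ, x₀ ≤ x → x ≤ y → f y / f x ≤ C

open Real Topology

theorem intervalIntegral_conv_self_eq_two_mul {f : ℝ → ℝ} {x : ℝ}
    (h : IntervalIntegrable (fun y => f (x - y) * f y) volume 0 (x / 2)) :
    ∫ y in 0..x, f (x - y) * f y = 2 * ∫ y in 0..x / 2, f (x - y) * f y := by
  have hrefl : ∫ y in x / 2..x, f (x - y) * f y = ∫ y in 0..x / 2, f (x - y) * f y := by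
    simpa [mul_comm, sub_half] using
      intervalIntegral.integral_comp_sub_left (a := x / 2) (b := x) (fun y => f (x - y) * f y) x
  have h' : IntervalIntegrable (fun y => f (x - y) * f y) volume (x / 2) x := by
    simpa [mul_comm, sub_half] using (h.comp_sub_left x).symm
  rw [← intervalIntegral.integral_add_adjacent_intervals h h', hrefl, two_mul]

theorem IsDensity.integrableOn {f : ℝ → ℝ} (hf : IsDensity f) : IntegrableOn f (Ioi 0) :=
  Integrable.of_integral_ne_zero (by rw [hf.2.2.2]; exact one_ne_zero)

theorem subexpDensity_of_eventually_le_mul {f : ℝ → ℝ} (hf : IsDensity f)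
    (hL : LongTailedDensity f) {C : ℝ}
    (hC : ∀ᶠ x in atTop, ∀ y ∈ Icc 0 (x / 2), f (x - y) ≤ C * f x) : SubexpDensity f := by
  have hfi := hf.integrableOn
  obtain ⟨hmeas, -, hnonneg, hone⟩ := hf
  have hgood : ∀ᶠ x in atTop, 0 ≤ x ∧ 0 < f x ∧ ∀ y ∈ Icc 0 (x / 2), f (x - y) ≤ C * f x :=
    (eventually_ge_atTop 0).and (hL.1.and hC)
  have hbound : ∀ᶠ x in atTop, ∀ y ∈ Ioc 0 (x / 2), f (x - y) * f y ≤ C * f x * f y :=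
    hgood.mono fun x ⟨_, _, hx⟩ y hy =>
      mul_le_mul_of_nonneg_right (hx y (Ioc_subset_Icc_self hy)) (hnonneg y)
  have hlim : Tendsto (fun x => ∫ y in Ioi 0,
      (Ioc 0 (x / 2)).indicator (fun y => f (x - y) * f y / f x) y) atTop (𝓝 1) := by
    rw [← hone]
    refine tendsto_integral_filter_of_dominated_convergence (fun y => |C| * f y)
      (Eventually.of_forall fun x => ?_) ?_ (hfi.const_mul _) ?_
    · exact ((((hmeas.comp (measurable_const.sub measurable_id)).mul hmeas).div_const _).indicator
        measurableSet_Ioc).aestronglyMeasurable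
    · filter_upwards [hgood, hbound] with x ⟨_, hfx, _⟩ hx
      refine Eventually.of_forall fun y => ?_
      by_cases hy : y ∈ Ioc 0 (x / 2)
      · rw [indicator_of_mem hy,
          norm_of_nonneg (div_nonneg (mul_nonneg (hnonneg _) (hnonneg _)) hfx.le), div_le_iff₀ hfx]
        nlinarith [hx y hy,
          mul_nonneg (sub_nonneg.2 (le_abs_self C)) (mul_nonneg hfx.le (hnonneg y))]
      · rw [indicator_of_notMem hy, norm_zero]
        exact mul_nonneg (abs_nonneg C) (hnonneg y)
    · refine ae_restrict_of_forall_mem measurableSet_Ioi fun y hy => ?_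
      have hratio : Tendsto (fun x => f (x - y) / f x * f y) atTop (𝓝 (f y)) := by
        simpa [sub_eq_add_neg] using (hL.2 (-y)).mul_const (f y)
      refine hratio.congr' ?_
      filter_upwards [eventually_ge_atTop (2 * y)] with x hx
      simp only [indicator_of_mem (show y ∈ Ioc 0 (x / 2) from ⟨hy, by linarith⟩),
        div_mul_eq_mul_div]
  refine ⟨hL, (hlim.const_mul 2).congr' ?_ |>.trans (by rw [mul_one])⟩
  filter_upwards [hgood, hbound] with x ⟨hx0, _, _⟩ hx
  have hint : IntegrableOn (fun y => f (x - y) * f y) (Ioc 0 (x / 2)) :=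
    ((hfi.mono_set Ioc_subset_Ioi_self).const_mul (C * f x)).mono'
      ((hmeas.comp (measurable_const.sub measurable_id)).mul hmeas).aestronglyMeasurable
      (ae_restrict_of_forall_mem measurableSet_Ioc fun y hy => by
        rw [norm_of_nonneg (mul_nonneg (hnonneg _) (hnonneg _))]; exact hx y hy)
  rw [intervalIntegral_conv_self_eq_two_mul
      ((intervalIntegrable_iff_integrableOn_Ioc_of_le (by linarith)).2 hint),
    intervalIntegral.integral_of_le (by linarith), setIntegral_indicator measurableSet_Ioc,
    inter_eq_right.2 Ioc_subset_Ioi_self, integral_div, mul_div_assoc]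

theorem longTailedDensity_of_le_exp_mul {f : ℝ → ℝ} {K M : ℝ} (hpos : ∀ x, M ≤ x → 0 < f x)
    (hcmp : ∀ u x, M ≤ u → M ≤ x → f u ≤ exp (K * |log u - log x|) * f x) :
    LongTailedDensity f := by
  refine ⟨(eventually_ge_atTop M).mono hpos, fun t => ?_⟩
  have hgap : Tendsto (fun x => K * |log (x + t) - log x|) atTop (𝓝 0) := by
    simpa using ((tendsto_log_comp_add_sub_log t).abs.const_mul K)
  have hupper : Tendsto (fun x => exp (K * |log (x + t) - log x|)) atTop (𝓝 1) := by
    simpa [Function.comp_def] using (continuous_exp.tendsto _).comp hgap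
  have hlower : Tendsto (fun x => exp (-(K * |log (x + t) - log x|))) atTop (𝓝 1) := by
    simpa [Function.comp_def] using (continuous_exp.tendsto _).comp hgap.neg
  refine tendsto_of_tendsto_of_tendsto_of_le_of_le' hlower hupper ?_ ?_ <;>
    filter_upwards [eventually_ge_atTop M, eventually_ge_atTop (M - t)] with x hx hxt
  · have hback := hcmp x (x + t) hx (by linarith)
    rw [abs_sub_comm] at hback
    rw [le_div_iff₀ (hpos x hx), exp_neg, inv_mul_le_iff₀ (exp_pos _)]
    exact hback
  · rw [div_le_iff₀ (hpos x hx)]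
    exact hcmp (x + t) x (by linarith) hx

theorem eventually_le_mul_of_le_exp_mul {f : ℝ → ℝ} {K M : ℝ} (hK : 0 ≤ K)
    (hpos : ∀ x, M ≤ x → 0 < f x)
    (hcmp : ∀ u x, M ≤ u → M ≤ x → f u ≤ exp (K * |log u - log x|) * f x) :
    ∀ᶠ x in atTop, ∀ y ∈ Icc 0 (x / 2), f (x - y) ≤ exp (K * log 2) * f x := by
  filter_upwards [eventually_ge_atTop (2 * M), eventually_gt_atTop 0] with x hxM hx y ⟨hy0, hy⟩
  have hxy : 0 < x - y := by linarith
  have hlog : |log (x - y) - log x| ≤ log 2 := by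
    rw [abs_sub_comm, abs_of_nonneg (sub_nonneg.2 (log_le_log hxy (by linarith))),
      ← log_div hx.ne' hxy.ne']
    exact log_le_log (div_pos hx hxy) ((div_le_iff₀ hxy).2 (by linarith))
  refine (hcmp (x - y) x (by linarith) (by linarith)).trans ?_
  gcongr
  exact (hpos x (by linarith)).le

theorem le_log_of_exp_le {a x : ℝ} (hx : exp a ≤ x) : a ≤ log x :=
  (le_log_iff_exp_le ((exp_pos _).trans_le hx)).2 hx

theorem isDensity_inv_integral_mul {g : ℝ → ℝ} (hmeas : Measurable g)
    (hzero : ∀ x < 0, g x = 0) (hnonneg : ∀ x, 0 ≤ g x) (hpos : 0 < ∫ y in Ioi 0, g y) :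
    IsDensity fun x => (∫ y in Ioi 0, g y)⁻¹ * g x :=
  ⟨hmeas.const_mul _, fun x hx => by simp [hzero x hx],
    fun x => mul_nonneg (inv_nonneg.2 hpos.le) (hnonneg x),
    by rw [integral_const_mul, inv_mul_cancel₀ hpos.ne']⟩

def oscExponent (v : ℝ) : ℝ := 20 * √v * sin √v - 2 * v

theorem hasDerivAt_oscExponent {v : ℝ} (hv : 0 < v) :
    HasDerivAt oscExponent (10 * sin √v / √v + 10 * cos √v - 2) v := by
  have hsqrt := hasDerivAt_sqrt hv.ne'
  refine (((hsqrt.const_mul 20).mul hsqrt.sin).sub ((hasDerivAt_id v).const_mul 2)).congr_deriv ?_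
  have : √v ≠ 0 := (sqrt_pos.2 hv).ne'
  field_simp
  ring

theorem abs_oscExponent_sub_le {v w : ℝ} (hv : 1600 ≤ v) (hw : 1600 ≤ w) :
    |oscExponent v - oscExponent w| ≤ 13 * |v - w| := by
  have hderiv : ∀ u ∈ Ici (1600 : ℝ), |10 * sin √u / √u + 10 * cos √u - 2| ≤ 13 := by
    intro u hu
    have h40 : 40 ≤ √u := le_sqrt_of_sq_le (by norm_num; exact hu)
    have hsin : |10 * sin √u / √u| ≤ 1 := by
      rw [abs_div, abs_of_pos (by linarith : (0 : ℝ) < √u), div_le_one (by linarith), abs_mul,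
        abs_of_pos (by norm_num : (0 : ℝ) < 10)]
      nlinarith [abs_sin_le_one √u]
    obtain ⟨hsin₁, hsin₂⟩ := abs_le.1 hsin
    exact abs_le.2 ⟨by linarith [neg_one_le_cos √u], by linarith [cos_le_one √u]⟩
  have := (convex_Ici (1600 : ℝ)).norm_image_sub_le_of_norm_hasDerivWithin_le
    (fun u hu => (hasDerivAt_oscExponent (by simp at hu; linarith)).hasDerivWithinAt) hderiv
    (mem_Ici.2 hw) (mem_Ici.2 hv)
  simpa only [Real.norm_eq_abs] using this

theorem oscExponent_le {v : ℝ} (hv : 1600 ≤ v) : oscExponent v ≤ -(3 / 2) * v := by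
  have h40 : 40 ≤ √v := le_sqrt_of_sq_le (by norm_num; exact hv)
  have hsq : √v * √v = v := mul_self_sqrt (by linarith)
  have hsin : √v * sin √v ≤ √v := by nlinarith [sin_le_one √v]
  unfold oscExponent
  nlinarith

theorem oscExponent_sq_add_pi_sub {s : ℝ} (hs : 0 ≤ s) (hsin : sin s = -1) :
    oscExponent ((s + π) ^ 2) - oscExponent (s ^ 2) = (2 * s + π) * (20 - 2 * π) := by
  simp only [oscExponent, sqrt_sq hs, sqrt_sq (by positivity : 0 ≤ s + π), sin_add_pi, hsin]
  ring

def oscKernel : ℝ → ℝ := (Ici (exp 1600)).indicator fun x => exp (oscExponent (log x))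

theorem oscKernel_of_le {x : ℝ} (hx : exp 1600 ≤ x) : oscKernel x = exp (oscExponent (log x)) :=
  indicator_of_mem hx _

theorem measurable_exp_oscExponent_log : Measurable fun x => exp (oscExponent (log x)) := by
  have : Continuous oscExponent := by unfold oscExponent; fun_prop
  exact measurable_exp.comp (this.measurable.comp measurable_log)

theorem measurable_oscKernel : Measurable oscKernel :=
  measurable_exp_oscExponent_log.indicator measurableSet_Ici

theorem integrableOn_exp_oscExponent_log :
    IntegrableOn (fun x => exp (oscExponent (log x))) (Ici (exp 1600)) := by
  refine ((integrableOn_Ici_iff_integrableOn_Ioi).2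
    (integrableOn_Ioi_rpow_of_lt (by norm_num : -(3 / 2 : ℝ) < -1) (exp_pos 1600))).mono'
    measurable_exp_oscExponent_log.aestronglyMeasurable
    (ae_restrict_of_forall_mem measurableSet_Ici fun x hx => ?_)
  rw [norm_of_nonneg (exp_pos _).le, rpow_def_of_pos ((exp_pos _).trans_le hx), mul_comm]
  exact exp_le_exp.2 (oscExponent_le (le_log_of_exp_le hx))

theorem integral_oscKernel_pos : 0 < ∫ y in Ioi 0, oscKernel y := by
  rw [oscKernel, setIntegral_indicator measurableSet_Ici,
    inter_eq_right.2 (Ici_subset_Ioi.2 (exp_pos 1600)),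
    setIntegral_pos_iff_support_of_nonneg_ae (Eventually.of_forall fun _ => (exp_pos _).le)
      integrableOn_exp_oscExponent_log, Function.support_eq_univ fun _ => (exp_pos _).ne',
    univ_inter, volume_Ici]
  exact ENNReal.zero_lt_top

def oscDensity (x : ℝ) : ℝ := (∫ y in Ioi 0, oscKernel y)⁻¹ * oscKernel x

theorem isDensity_oscDensity : IsDensity oscDensity :=
  isDensity_inv_integral_mul measurable_oscKernel
    (fun _ hx => indicator_of_notMem (fun h => ((exp_pos _).trans_le h).not_gt hx) _)
    (fun _ => indicator_nonneg (fun _ _ => (exp_pos _).le) _) integral_oscKernel_pos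

theorem oscDensity_pos {x : ℝ} (hx : exp 1600 ≤ x) : 0 < oscDensity x :=
  mul_pos (inv_pos.2 integral_oscKernel_pos) (by rw [oscKernel_of_le hx]; exact exp_pos _)

theorem oscDensity_div {x y : ℝ} (hx : exp 1600 ≤ x) (hy : exp 1600 ≤ y) :
    oscDensity y / oscDensity x = exp (oscExponent (log y) - oscExponent (log x)) := by
  rw [oscDensity, oscDensity, mul_div_mul_left _ _ (inv_pos.2 integral_oscKernel_pos).ne',
    oscKernel_of_le hx, oscKernel_of_le hy, exp_sub]

theorem oscDensity_le_exp_mul {u x : ℝ} (hu : exp 1600 ≤ u) (hx : exp 1600 ≤ x) :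
    oscDensity u ≤ exp (13 * |log u - log x|) * oscDensity x := by
  rw [← div_le_iff₀ (oscDensity_pos hx), oscDensity_div hx hu]
  exact exp_le_exp.2 ((le_abs_self _).trans
    (abs_oscExponent_sub_le (le_log_of_exp_le hu) (le_log_of_exp_le hx)))

theorem exists_lt_oscDensity_div (x₀ C : ℝ) :
    ∃ x y, x₀ ≤ x ∧ x ≤ y ∧ C < oscDensity y / oscDensity x := by
  have hs : Tendsto (fun n : ℕ => 2 * π * n - π / 2) atTop atTop := by
    simpa [sub_eq_add_neg] using tendsto_atTop_add_const_right _ (-(π / 2))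
      (tendsto_natCast_atTop_atTop.const_mul_atTop (by positivity : 0 < 2 * π))
  have hx : Tendsto (fun n : ℕ => exp ((2 * π * n - π / 2) ^ 2)) atTop atTop :=
    tendsto_exp_atTop.comp ((tendsto_pow_atTop two_ne_zero).comp hs)
  have hgap : Tendsto (fun n : ℕ => exp ((2 * (2 * π * n - π / 2) + π) * (20 - 2 * π)))
      atTop atTop :=
    tendsto_exp_atTop.comp (((tendsto_atTop_add_const_right _ π
      (hs.const_mul_atTop two_pos))).atTop_mul_const (by linarith [pi_lt_four]))
  obtain ⟨n, hs40, hx₀, hC⟩ := ((hs.eventually_ge_atTop 40).and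
    ((hx.eventually_ge_atTop x₀).and (hgap.eventually_gt_atTop C))).exists
  set s := 2 * π * n - π / 2
  have hsin : sin s = -1 := by
    rw [show s = -(π / 2) + (n : ℤ) * (2 * π) by push_cast; ring, sin_add_int_mul_two_pi,
      sin_neg, sin_pi_div_two]
  have hM : exp 1600 ≤ exp (s ^ 2) := exp_le_exp.2 (by nlinarith)
  have hxy : exp (s ^ 2) ≤ exp ((s + π) ^ 2) := exp_le_exp.2 (by nlinarith [pi_pos])
  refine ⟨_, _, hx₀, hxy, ?_⟩
  rwa [oscDensity_div hM (hM.trans hxy), log_exp, log_exp,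
    oscExponent_sq_add_pi_sub (by linarith) hsin]

theorem subexponential_density_not_almost_decreasing :
    ∃ f : ℝ → ℝ, IsDensity f ∧ SubexpDensity f ∧ ¬ AlmostDecreasing f := by
  have hpos : ∀ x, exp 1600 ≤ x → 0 < oscDensity x := fun _ => oscDensity_pos
  have hcmp : ∀ u x, exp 1600 ≤ u → exp 1600 ≤ x →
      oscDensity u ≤ exp (13 * |log u - log x|) * oscDensity x :=
    fun _ _ => oscDensity_le_exp_mul
  refine ⟨oscDensity, isDensity_oscDensity,
    subexpDensity_of_eventually_le_mul isDensity_oscDensity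
      (longTailedDensity_of_le_exp_mul hpos hcmp)
      (eventually_le_mul_of_le_exp_mul (by norm_num) hpos hcmp), ?_⟩
  rintro ⟨x₀, -, -, C, hC⟩
  obtain ⟨x, y, hx, hxy, hlt⟩ := exists_lt_oscDensity_div x₀ C
  exact (hC x y hx hxy).not_gt hlt
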